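/- arXiv:2306.01606 — 5 statements merged into one kernel-verified Lean document; each statement's English description precedes it below -/
import Mathlib

section
/- Let d ≥ 3 and 1 ≤ d' < d. Define γ(θ; u_{-d'}) = Σ_{1 ≤ d'' ≤ d, d'' ≠ d'} u_{d''} θ^{d''}/(d'')!, with parameters u_{-d'} = (u₁,…,u_{d'-1}, u_{d'+1},…,u_d) ∈ ℝ^{d-1}. If u_{d'+1} ≠ 0, then γ satisfies the (d−1)-parameter cinematic curvature condition at every point (θ; u_{-d'}) with θ = 0. -/
/-!
At `θ = 0` the entries of the matrix are Taylor coefficients of the polynomial `γ`: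
`∂_θ^n γ(0) = u_n` for `1 ≤ n ≤ d`, `n ≠ d'`, and `0` otherwise. Hence the column of `∂/∂u_m` is
the standard basis vector of the row `∂_θ^m`, and these columns cover every row except the
`∂_θ^{d'}` one, where the `θ`-column has the entry `∂_θ^{d'+1} γ(0) = u_{d'+1}`. Cycling the
columns turns the matrix into the identity with one column replaced, whose determinant is that
entry, so the determinant is `± u_{d'+1}`.
-/

/-- The curve `γ(θ; u_{-d'}) = ∑_{1 ≤ k ≤ d, k ≠ d'} u_k θ^k / k!`. -/
noncomputable def gammaMinus (d d' : ℕ) (u : ℕ → ℝ) (θ : ℝ) : ℝ :=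
  ∑ k ∈ Finset.Icc 1 d, (if k = d' then 0 else u k) * θ ^ k / (Nat.factorial k : ℝ)

open Polynomial Nat

theorem Polynomial.iteratedDeriv_eval {𝕜 : Type*} [NontriviallyNormedField 𝕜] (p : 𝕜[X])
    (n : ℕ) :
    iteratedDeriv n (fun x => p.eval x) = fun x => (derivative^[n] p).eval x := by
  induction n generalizing p with
  | zero => rfl
  | succ n ih =>
    have hderiv : deriv (fun x => p.eval x) = fun x => p.derivative.eval x := by
      ext
      exact Polynomial.deriv p
    rw [iteratedDeriv_succ', hderiv, ih, Function.iterate_succ_apply]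

theorem Polynomial.iteratedDeriv_eval_zero {𝕜 : Type*} [NontriviallyNormedField 𝕜] (p : 𝕜[X])
    (n : ℕ) :
    iteratedDeriv n (fun x => p.eval x) 0 = n ! * p.coeff n := by
  rw [p.iteratedDeriv_eval]
  dsimp only
  rw [← coeff_zero_eq_eval_zero, coeff_iterate_derivative, zero_add,
    Nat.descFactorial_self, nsmul_eq_mul]

theorem iteratedDeriv_gammaMinus_zero (d d' : ℕ) (u : ℕ → ℝ) (n : ℕ) :
    iteratedDeriv n (gammaMinus d d' u) 0 = if 1 ≤ n ∧ n ≤ d ∧ n ≠ d' then u n else 0 := by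
  have hpoly : gammaMinus d d' u = fun θ => (∑ k ∈ Finset.Icc 1 d,
      C ((if k = d' then 0 else u k) / (k ! : ℝ)) * X ^ k).eval θ := by
    ext θ
    simp only [gammaMinus, eval_finsetSum, eval_mul, eval_C, eval_pow, eval_X]
    exact Finset.sum_congr rfl fun k _ => by ring
  rw [hpoly, iteratedDeriv_eval_zero, finsetSum_coeff]
  simp only [coeff_C_mul_X_pow, Finset.sum_ite_eq, Finset.mem_Icc]
  split_ifs <;> first | omega | simp | field_simp

theorem Matrix.det_updateCol_one {n R : Type*} [Fintype n] [DecidableEq n] [CommRing R]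
    (k : n) (c : n → R) : ((1 : Matrix n n R).updateCol k c).det = c k := by
  rw [← cramer_apply, cramer_one]
  rfl

/-- Column `j ≥ 1` of the matrix differentiates in `u_{paramIndex d' j}`, skipping `u_{d'}`. -/
def paramIndex (d' j : ℕ) : ℕ := if j < d' then j else j + 1

noncomputable def cinematicMatrix (d d' : ℕ) (u : ℕ → ℝ) : Matrix (Fin d) (Fin d) ℝ :=
  Matrix.of fun i j =>
    if j.1 = 0 then
      deriv (fun t : ℝ => iteratedDeriv (i.1 + 1) (gammaMinus d d' u) t) 0
    else
      deriv (fun a : ℝ =>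
          iteratedDeriv (i.1 + 1) (gammaMinus d d' (Function.update u (paramIndex d' j) a)) 0)
        (u (paramIndex d' j))

theorem cinematicMatrix_apply_of_eq_zero {d d' : ℕ} {u : ℕ → ℝ} {i j : Fin d} (hj : j.1 = 0) :
    cinematicMatrix d d' u i j = iteratedDeriv (i.1 + 2) (gammaMinus d d' u) 0 := by
  rw [cinematicMatrix, Matrix.of_apply, if_pos hj]
  exact congrFun iteratedDeriv_succ.symm 0

theorem cinematicMatrix_apply_of_ne_zero {d d' : ℕ} {u : ℕ → ℝ} {i j : Fin d} (hj : j.1 ≠ 0) :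
    cinematicMatrix d d' u i j = if i.1 + 1 = paramIndex d' j then 1 else 0 := by
  have hm : 1 ≤ paramIndex d' j ∧ paramIndex d' j ≤ d ∧ paramIndex d' j ≠ d' := by
    unfold paramIndex; split_ifs <;> omega
  simp only [cinematicMatrix, Matrix.of_apply, if_neg hj, iteratedDeriv_gammaMinus_zero,
    Function.update_apply]
  by_cases hi : i.1 + 1 = paramIndex d' j
  · simp only [hi, hm, if_true, ne_eq, not_false_eq_true, and_self, deriv_id'']
  · simp only [hi, if_false, deriv_const]

theorem paramIndex_cycleRange {d d' : ℕ} (k : Fin d) (hk : k.1 + 1 = d') {j : Fin d}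
    (hj : j ≠ k) :
    (k.cycleRange j).1 ≠ 0 ∧ paramIndex d' (k.cycleRange j) = j.1 + 1 := by
  rcases lt_or_gt_of_ne hj with h | h
  · rw [Fin.coe_cycleRange_of_lt h, paramIndex, if_pos (by omega)]
    exact ⟨by omega, rfl⟩
  · rw [Fin.cycleRange_of_gt h, paramIndex, if_neg (by omega)]
    exact ⟨by omega, rfl⟩

theorem cinematicMatrix_submatrix_cycleRange (d d' : ℕ) (u : ℕ → ℝ) (k : Fin d)
    (hk : k.1 + 1 = d') :
    (cinematicMatrix d d' u).submatrix id k.cycleRange =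
      (1 : Matrix (Fin d) (Fin d) ℝ).updateCol k
        fun i => iteratedDeriv (i.1 + 2) (gammaMinus d d' u) 0 := by
  ext i j
  rw [Matrix.submatrix_apply, id]
  by_cases hj : j = k
  · subst hj
    rw [Matrix.updateCol_self]
    exact cinematicMatrix_apply_of_eq_zero (by rw [Fin.coe_cycleRange_of_le le_rfl, if_pos rfl])
  · obtain ⟨hj0, hparam⟩ := paramIndex_cycleRange k hk hj
    rw [Matrix.updateCol_ne hj, cinematicMatrix_apply_of_ne_zero hj0, hparam]
    simp only [Matrix.one_apply, Fin.ext_iff, add_left_inj]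

theorem stmt_1_general (d d' : ℕ) (h1 : 1 ≤ d') (h2 : d' < d)
    (u : ℕ → ℝ) (hu : u (d' + 1) ≠ 0) :
    (Matrix.of fun i j : Fin d =>
      if j.1 = 0 then
        deriv (fun t : ℝ => iteratedDeriv (i.1 + 1) (gammaMinus d d' u) t) 0
      else
        deriv (fun a : ℝ =>
            iteratedDeriv (i.1 + 1)
              (gammaMinus d d' (Function.update u (if j.1 < d' then j.1 else j.1 + 1) a)) 0)
          (u (if j.1 < d' then j.1 else j.1 + 1))).det ≠ 0 := by
  change (cinematicMatrix d d' u).det ≠ 0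
  obtain ⟨k, hk⟩ : ∃ k : Fin d, k.1 + 1 = d' := ⟨⟨d' - 1, by omega⟩, by simp only; omega⟩
  have hdet := congrArg Matrix.det (cinematicMatrix_submatrix_cycleRange d d' u k hk)
  rw [Matrix.det_permute', Matrix.det_updateCol_one, iteratedDeriv_gammaMinus_zero,
    if_pos (by omega), show k.1 + 2 = d' + 1 by omega] at hdet
  intro h
  rw [h, mul_zero] at hdet
  exact hu hdet.symm

/-- for `d ≥ 3`, `1 ≤ d' < d`, if `u_{d'+1} ≠ 0` then `γ(θ; u_{-d'})`
satisfies the `(d-1)`-parameter cinematic curvature condition at every point with `θ = 0`: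
the `d × d` matrix whose first column is `∂T/∂θ` and whose remaining columns are
`∂T/∂u_k` for `k ∈ {1,…,d} \ {d'}` (where `T = (∂_θ γ, …, ∂_θ^d γ)ᵀ`) has nonzero
determinant. -/
theorem stmt_1 (d d' : ℕ) (hd : 3 ≤ d) (h1 : 1 ≤ d') (h2 : d' < d)
    (u : ℕ → ℝ) (hu : u (d' + 1) ≠ 0) :
    (Matrix.of fun i j : Fin d =>
      if j.1 = 0 then
        deriv (fun t : ℝ => iteratedDeriv (i.1 + 1) (gammaMinus d d' u) t) 0
      else
        deriv (fun a : ℝ =>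
            iteratedDeriv (i.1 + 1)
              (gammaMinus d d' (Function.update u (if j.1 < d' then j.1 else j.1 + 1) a)) 0)
          (u (if j.1 < d' then j.1 else j.1 + 1))).det ≠ 0 :=
  stmt_1_general d d' h1 h2 u hu
end

section
/- Let φ(θ; y, a, b) = y − b√(1 − (θ/a)²), defined for a > 0, b ∈ ℝ, and |θ| < a. Then the 3×3 determinant det[[∂_y φ, ∂_a φ, ∂_b φ], [∂_y ∂_θ φ, ∂_a ∂_θ φ, ∂_b ∂_θ φ], [∂_y ∂_θ² φ, ∂_a ∂_θ² φ, ∂_b ∂_θ² φ]] equals 2bθ³ / (a(a² − θ²)³). -/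
/-! The θ-derivatives of φ of positive order do not depend on `y` and are linear in `b`:
`∂_θ φ = b θ / (a√(a² − θ²))` and `∂_θ² φ = b a / √(a² − θ²)³`. So the first column of the
matrix is `(1, 0, 0)`, and writing `∂_θ^k φ = b h_k(a)` the determinant is the minor
`b (h₁' h₂ − h₁ h₂')`, which a direct computation turns into `2bθ³ / (a(a² − θ²)³)`. -/

/-- `φ(θ; y, a, b) = y − b√(1 − (θ/a)²)`. -/
noncomputable def phiEll (θ y a b : ℝ) : ℝ := y - b * Real.sqrt (1 - (θ / a) ^ 2)

open Real Filter Topology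

lemma sq_sub_sq_pos_of_abs_lt {θ a : ℝ} (h : |θ| < a) : 0 < a ^ 2 - θ ^ 2 :=
  sub_pos.2 (sq_lt_sq' (abs_lt.1 h).1 (abs_lt.1 h).2)

lemma isOpen_setOf_abs_lt (θ : ℝ) : IsOpen {a : ℝ | |θ| < a} :=
  isOpen_lt continuous_const continuous_id

section AffineInParameter

variable {U : Set ℝ} {G : ℝ → ℝ → ℝ → ℝ} {f : ℝ → ℝ} {y a b : ℝ}

lemma deriv_fst_of_eq_mul (hG : ∀ y b, ∀ a ∈ U, G y a b = b * f a) (ha : a ∈ U) :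
    deriv (fun y' => G y' a b) y = 0 := by
  simp only [hG _ b a ha, deriv_const]

lemma deriv_snd_of_eq_mul (hU : IsOpen U) (hG : ∀ y b, ∀ a ∈ U, G y a b = b * f a)
    (ha : a ∈ U) : deriv (fun a' => G y a' b) a = b * deriv f a := by
  have hev : (fun a' => G y a' b) =ᶠ[𝓝 a] fun a' => b * f a' := by
    filter_upwards [hU.mem_nhds ha] with a' ha' using hG y b a' ha'
  rw [hev.deriv_eq, deriv_const_mul_field]

lemma deriv_thd_of_eq_mul (hG : ∀ y b, ∀ a ∈ U, G y a b = b * f a) (ha : a ∈ U) :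
    deriv (fun b' => G y a b') b = f a := by
  simp only [hG y _ a ha, deriv_mul_const_field', deriv_id'', one_mul]

end AffineInParameter

section Derivatives

variable {θ a : ℝ}

lemma hasDerivAt_sqrt_sq_sub_const_sq (h : |θ| < a) :
    HasDerivAt (fun a => √(a ^ 2 - θ ^ 2)) (a / √(a ^ 2 - θ ^ 2)) a := by
  convert ((hasDerivAt_pow 2 a).sub_const (θ ^ 2)).sqrt (sq_sub_sq_pos_of_abs_lt h).ne' using 1
  field_simp
  ring

lemma hasDerivAt_sqrt_const_sq_sub_sq (h : |θ| < a) :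
    HasDerivAt (fun t => √(a ^ 2 - t ^ 2)) (-θ / √(a ^ 2 - θ ^ 2)) θ := by
  convert ((hasDerivAt_pow 2 θ).const_sub (a ^ 2)).sqrt (sq_sub_sq_pos_of_abs_lt h).ne' using 1
  field_simp
  ring

lemma hasDerivAt_div_mul_sqrt_sq_sub_sq (h : |θ| < a) :
    HasDerivAt (fun a => θ / (a * √(a ^ 2 - θ ^ 2)))
      (-(θ * (2 * a ^ 2 - θ ^ 2)) / (a ^ 2 * √(a ^ 2 - θ ^ 2) ^ 3)) a := by
  have ha : 0 < a := (abs_nonneg θ).trans_lt h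
  have hpos := sq_sub_sq_pos_of_abs_lt h
  have hr2 : √(a ^ 2 - θ ^ 2) ^ 2 = a ^ 2 - θ ^ 2 := sq_sqrt hpos.le
  refine ((hasDerivAt_const a θ).fun_div ((hasDerivAt_id' a).fun_mul
    (hasDerivAt_sqrt_sq_sub_const_sq h)) (by positivity)).congr_deriv ?_
  field_simp
  linear_combination (-θ) * hr2

lemma hasDerivAt_div_sqrt_sq_sub_sq_pow_three (h : |θ| < a) :
    HasDerivAt (fun a => a / √(a ^ 2 - θ ^ 2) ^ 3)
      (-(2 * a ^ 2 + θ ^ 2) / √(a ^ 2 - θ ^ 2) ^ 5) a := by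
  have hpos := sq_sub_sq_pos_of_abs_lt h
  have hr2 : √(a ^ 2 - θ ^ 2) ^ 2 = a ^ 2 - θ ^ 2 := sq_sqrt hpos.le
  refine ((hasDerivAt_id' a).fun_div ((hasDerivAt_sqrt_sq_sub_const_sq h).fun_pow 3)
    (by positivity)).congr_deriv ?_
  field_simp
  linear_combination √(a ^ 2 - θ ^ 2) ^ 2 * hr2

end Derivatives

lemma phiEll_eq_sub_sqrt {a : ℝ} (ha : 0 < a) (t y b : ℝ) :
    phiEll t y a b = y - b / a * √(a ^ 2 - t ^ 2) := by
  rw [phiEll, show 1 - (t / a) ^ 2 = (a ^ 2 - t ^ 2) / a ^ 2 by field_simp,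
    sqrt_div' _ (sq_nonneg a), sqrt_sq ha.le]
  ring

lemma deriv_phiEll_fst (θ y a b : ℝ) : deriv (fun y' => phiEll θ y' a b) y = 1 := by
  simp only [phiEll, deriv_sub_const, deriv_id'']

lemma hasDerivAt_phiEll {θ a : ℝ} (y b : ℝ) (h : |θ| < a) :
    HasDerivAt (fun t => phiEll t y a b) (b * (θ / (a * √(a ^ 2 - θ ^ 2)))) θ := by
  have ha : 0 < a := (abs_nonneg θ).trans_lt h
  simp only [phiEll_eq_sub_sqrt ha]
  exact (((hasDerivAt_sqrt_const_sq_sub_sq h).const_mul (b / a)).const_sub y).congr_deriv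
    (by ring)

lemma iteratedDeriv_one_phiEll {θ a : ℝ} (y b : ℝ) (h : |θ| < a) :
    iteratedDeriv 1 (fun t => phiEll t y a b) θ = b * (θ / (a * √(a ^ 2 - θ ^ 2))) := by
  rw [iteratedDeriv_one, (hasDerivAt_phiEll y b h).deriv]

lemma iteratedDeriv_two_phiEll {θ a : ℝ} (y b : ℝ) (h : |θ| < a) :
    iteratedDeriv 2 (fun t => phiEll t y a b) θ = b * (a / √(a ^ 2 - θ ^ 2) ^ 3) := by
  have ha : 0 < a := (abs_nonneg θ).trans_lt h
  have hpos := sq_sub_sq_pos_of_abs_lt h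
  have hev : iteratedDeriv 1 (fun t => phiEll t y a b)
      =ᶠ[𝓝 θ] fun t => b * (t / (a * √(a ^ 2 - t ^ 2))) := by
    filter_upwards [(isOpen_lt continuous_abs continuous_const).mem_nhds h] with t ht
      using iteratedDeriv_one_phiEll y b ht
  have hd := (((hasDerivAt_id' θ).fun_div ((hasDerivAt_sqrt_const_sq_sub_sq h).const_mul a)
    (by positivity)).const_mul b)
  rw [iteratedDeriv_succ, hev.deriv_eq, hd.deriv]
  have hr2 : √(a ^ 2 - θ ^ 2) ^ 2 = a ^ 2 - θ ^ 2 := sq_sqrt hpos.le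
  field_simp
  linear_combination b * hr2

theorem stmt_2_general (θ y a b : ℝ) (hθ : |θ| < a) :
    (Matrix.of fun r c : Fin 3 =>
      ![deriv (fun y' : ℝ => iteratedDeriv r.1 (fun t => phiEll t y' a b) θ) y,
        deriv (fun a' : ℝ => iteratedDeriv r.1 (fun t => phiEll t y a' b) θ) a,
        deriv (fun b' : ℝ => iteratedDeriv r.1 (fun t => phiEll t y a b') θ) b] c).det
    = 2 * b * θ ^ 3 / (a * (a ^ 2 - θ ^ 2) ^ 3) := by
  have hU := isOpen_setOf_abs_lt θ
  have h₁ : ∀ y b, ∀ a ∈ {a | |θ| < a}, iteratedDeriv 1 (fun t => phiEll t y a b) θ =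
      b * (θ / (a * √(a ^ 2 - θ ^ 2))) := fun y b _ h => iteratedDeriv_one_phiEll y b h
  have h₂ : ∀ y b, ∀ a ∈ {a | |θ| < a}, iteratedDeriv 2 (fun t => phiEll t y a b) θ =
      b * (a / √(a ^ 2 - θ ^ 2) ^ 3) := fun y b _ h => iteratedDeriv_two_phiEll y b h
  rw [Matrix.det_fin_three]
  simp only [Matrix.of_apply, Matrix.cons_val_zero, Matrix.cons_val_one, Matrix.head_cons,
    Matrix.cons_val_two, Matrix.tail_cons, Fin.val_zero, Fin.val_one, Fin.val_two,
    iteratedDeriv_zero]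
  rw [deriv_fst_of_eq_mul h₁ hθ, deriv_fst_of_eq_mul h₂ hθ, deriv_snd_of_eq_mul hU h₁ hθ,
    deriv_snd_of_eq_mul hU h₂ hθ, deriv_thd_of_eq_mul h₁ hθ, deriv_thd_of_eq_mul h₂ hθ,
    (hasDerivAt_div_mul_sqrt_sq_sub_sq hθ).deriv,
    (hasDerivAt_div_sqrt_sq_sub_sq_pow_three hθ).deriv]
  have hpos := sq_sub_sq_pos_of_abs_lt hθ
  have hr2 : √(a ^ 2 - θ ^ 2) ^ 2 = a ^ 2 - θ ^ 2 := sq_sqrt hpos.le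
  simp only [deriv_phiEll_fst, mul_zero, zero_mul, sub_zero, add_zero, one_mul]
  field_simp
  rw [show √(a ^ 2 - θ ^ 2) ^ 6 = (√(a ^ 2 - θ ^ 2) ^ 2) ^ 3 by ring, hr2]
  ring

/-- for `a > 0`, `|θ| < a`, the determinant of the 3×3 matrix with
rows indexed by the number of θ-derivatives (0, 1, 2) and columns by the
parameters (y, a, b) equals `2bθ³ / (a(a² − θ²)³)`. -/
theorem stmt_2 (θ y a b : ℝ) (ha : 0 < a) (hθ : |θ| < a) :
    (Matrix.of fun r c : Fin 3 =>
      ![deriv (fun y' : ℝ => iteratedDeriv r.1 (fun t => phiEll t y' a b) θ) y,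
        deriv (fun a' : ℝ => iteratedDeriv r.1 (fun t => phiEll t y a' b) θ) a,
        deriv (fun b' : ℝ => iteratedDeriv r.1 (fun t => phiEll t y a b') θ) b] c).det
    = 2 * b * θ ^ 3 / (a * (a ^ 2 - θ ^ 2) ^ 3) :=
  stmt_2_general θ y a b hθ
end

section
/- Let d ≥ 3, 2 ≤ d' ≤ d, and γ(θ; v) = Σ_{j=1}^{d'-2} v_j θ^j/j! + θ^{d'}/d'! ⋅ (1 + v_{d'-1}) + Σ_{j=d'+1}^{d} (σ_j + v_{j-1}) θ^j/j!, where σ_j are fixed real numbers. Then γ satisfies the (d−1)-parameter cinematic curvature condition at the origin: det[∂T/∂θ, ∂T/∂v₁, …, ∂T/∂v_{d-1}]|_{θ=0, v=0} ≠ 0, where T(θ; v) = (∂_θ γ, …, ∂_θ^d γ)ᵀ. -/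
/-- Model 'Form (I)' curve with missing degree `d'−1` (here with `Q ≡ 0`, `P ≡ 0`):
`γ(θ; v) = ∑_{j=1}^{d'-2} v_j θ^j/j! + (1 + v_{d'-1}) θ^{d'}/d'!
          + ∑_{j=d'+1}^{d} (σ_j + v_{j-1}) θ^j/j!`. -/
noncomputable def gammaI (d d' : ℕ) (σ : ℕ → ℝ) (v : ℕ → ℝ) (θ : ℝ) : ℝ :=
  ∑ k ∈ Finset.Icc 1 d,
    (if k ≤ d' - 2 then v k
     else if k = d' - 1 then 0
     else if k = d' then 1 + v (d' - 1)
     else σ k + v (k - 1)) * θ ^ k / (Nat.factorial k : ℝ)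

/-!
The entries of the matrix only involve Taylor coefficients at `θ = 0`: `∂_θ^n γ(0; v)` is the
coefficient `c_n(v)` of `θ^n/n!`. Each parameter `v_j` enters exactly one coefficient, with
slope `1`, so the column `∂T/∂v_j` is a unit vector `e_k`; as `j` runs through `1, …, d - 1`, `k`
runs through every row index except the one of `∂_θ^{d'-1}`, because the coefficient of
`θ^{d'-1}` is absent. In that row the only nonzero entry is `∂_θ^{d'} γ(0; 0) = 1`, in the
`θ`-column, so expanding along it leaves an identity minor and the determinant is `±1`.
-/

open Finset Function Nat

theorem iteratedDeriv_sum_mul_pow_div_factorial_zero {𝕜 : Type*} [NontriviallyNormedField 𝕜]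
    [CharZero 𝕜] (s : Finset ℕ) (c : ℕ → 𝕜) (n : ℕ) :
    iteratedDeriv n (fun θ : 𝕜 => ∑ k ∈ s, c k * θ ^ k / (k ! : 𝕜)) 0 =
      if n ∈ s then c n else 0 := by
  rw [iteratedDeriv_fun_sum fun k _ => by fun_prop]
  simp only [iteratedDeriv_div_const, iteratedDeriv_const_mul_field, iteratedDeriv_fun_pow_zero,
    Nat.cast_ite, Nat.cast_zero, mul_ite, mul_zero, ite_div, zero_div, Finset.sum_ite_eq]
  congr 1
  exact mul_div_cancel_right₀ _ (Nat.cast_ne_zero.2 n.factorial_ne_zero)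

theorem Matrix.det_eq_neg_one_pow_mul_of_col_succ_eq_succAbove {R : Type*} [CommRing R] {n : ℕ}
    (A : Matrix (Fin (n + 1)) (Fin (n + 1)) R) (p : Fin (n + 1))
    (hA : ∀ i j, A i j.succ = if i = p.succAbove j then 1 else 0) :
    A.det = (-1) ^ (p : ℕ) * A p 0 := by
  have hrow : ∀ j : Fin n, A p j.succ = 0 := fun j => by simp [hA, Fin.ne_succAbove]
  have hminor : A.submatrix p.succAbove Fin.succ = 1 := by
    ext i j
    simp [hA, Matrix.one_apply]
  rw [Matrix.det_succ_row A p, Fintype.sum_eq_single 0]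
  · simp [hminor]
  · intro j hj
    obtain ⟨j, rfl⟩ := Fin.exists_succ_eq.mpr hj
    simp [hrow]

theorem Fin.val_succAbove {n : ℕ} (p : Fin (n + 1)) (j : Fin n) :
    (p.succAbove j : ℕ) = if (j : ℕ) < p then (j : ℕ) else j + 1 := by
  unfold Fin.succAbove
  split_ifs <;> simp_all [Fin.lt_def]

def formICoeff (d' : ℕ) (σ v : ℕ → ℝ) (k : ℕ) : ℝ :=
  if k ≤ d' - 2 then v k
  else if k = d' - 1 then 0
  else if k = d' then 1 + v (d' - 1)
  else σ k + v (k - 1)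

theorem iteratedDeriv_gammaI_zero (d d' : ℕ) (σ v : ℕ → ℝ) (n : ℕ) :
    iteratedDeriv n (gammaI d d' σ v) 0 = if n ∈ Icc 1 d then formICoeff d' σ v n else 0 :=
  iteratedDeriv_sum_mul_pow_div_factorial_zero _ _ n

theorem iteratedDeriv_gammaI_zero_self {d d' : ℕ} (h1 : 1 ≤ d') (h2 : d' ≤ d) (σ v : ℕ → ℝ) :
    iteratedDeriv d' (gammaI d d' σ v) 0 = 1 + v (d' - 1) := by
  rw [iteratedDeriv_gammaI_zero, if_pos (mem_Icc.2 ⟨h1, h2⟩), formICoeff,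
    if_neg (by omega), if_neg (by omega), if_pos rfl]

theorem deriv_ite_self_zero {𝕜 : Type*} [NontriviallyNormedField 𝕜] (P : Prop) [Decidable P]
    (x : 𝕜) : deriv (fun a : 𝕜 => if P then a else 0) x = if P then 1 else 0 := by
  split_ifs <;> simp

theorem deriv_formICoeff_update {d' : ℕ} (hd' : 2 ≤ d') (σ : ℕ → ℝ) (i j : ℕ) :
    deriv (fun a => formICoeff d' σ (update (fun _ => 0) (j + 1) a) (i + 1)) 0 =
      if i = (if j < d' - 2 then j else j + 1) then 1 else 0 := by
  unfold formICoeff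
  split_ifs <;> simp [update_apply, deriv_ite_self_zero] <;> omega

theorem stmt_12_general (d d' : ℕ) (h1 : 2 ≤ d') (h2 : d' ≤ d) (σ : ℕ → ℝ) :
    (Matrix.of fun i j : Fin d =>
      if j.1 = 0 then
        deriv (fun t : ℝ => iteratedDeriv (i.1 + 1) (gammaI d d' σ (fun _ => 0)) t) 0
      else
        deriv (fun a : ℝ =>
            iteratedDeriv (i.1 + 1) (gammaI d d' σ (Function.update (fun _ => (0:ℝ)) j.1 a)) 0)
          0).det ≠ 0 := by
  obtain ⟨n, rfl⟩ : ∃ n, d = n + 1 := ⟨d - 1, by omega⟩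
  have hd' : d' - 2 + 1 + 1 = d' := by omega
  rw [Matrix.det_eq_neg_one_pow_mul_of_col_succ_eq_succAbove _ ⟨d' - 2, by omega⟩]
  · simp only [Matrix.of_apply, Fin.val_zero, if_true, ← iteratedDeriv_succ, hd',
      iteratedDeriv_gammaI_zero_self (by omega) h2, add_zero, mul_one]
    exact pow_ne_zero _ (neg_ne_zero.2 one_ne_zero)
  · intro i j
    have hi : (i : ℕ) + 1 ∈ Icc 1 (n + 1) := by simp [i.is_le]
    simp only [Matrix.of_apply, Fin.val_succ, Nat.add_one_ne_zero, if_false,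
      iteratedDeriv_gammaI_zero, if_pos hi, deriv_formICoeff_update h1, Fin.ext_iff,
      Fin.val_succAbove]

/-- for `d ≥ 3` and `2 ≤ d' ≤ d`, the Form (I) model curve satisfies
the `(d−1)`-parameter cinematic curvature condition at the origin. -/
theorem stmt_12 (d d' : ℕ) (hd : 3 ≤ d) (h1 : 2 ≤ d') (h2 : d' ≤ d) (σ : ℕ → ℝ) :
    (Matrix.of fun i j : Fin d =>
      if j.1 = 0 then
        deriv (fun t : ℝ => iteratedDeriv (i.1 + 1) (gammaI d d' σ (fun _ => 0)) t) 0
      else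
        deriv (fun a : ℝ =>
            iteratedDeriv (i.1 + 1) (gammaI d d' σ (Function.update (fun _ => (0:ℝ)) j.1 a)) 0)
          0).det ≠ 0 :=
  stmt_12_general d d' h1 h2 σ
end

section
/- Let Φ(θ) = w_{k}(Δθ)^{k} + w_{k-2}(Δθ)^{k-2} + ⋯ + w₁(Δθ) + w₀ + R(Δθ), where k ≥ 2, Δθ = θ − θ₀, |w_k| ≥ c > 0, the (k−1)-degree coefficient is absent, |w_j| ≤ s^{k-j} for all 0 ≤ j ≤ k−2 for some 0 < s ≤ 1, and |R(Δθ)| ≤ A|Δθ|^{k+1}. Then there exist constants C, δ > 0 depending only on k, c, A such that |Φ(θ)| ≥ (c/2)|Δθ|^k whenever C s ≤ |Δθ| ≤ δ. -/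
/-!
Write `x = θ - θ₀`. On `C s ≤ |x|` each lower term satisfies
`|w_j x^j| ≤ s^(k-j) |x|^j ≤ |x|^k / C^(k-j) ≤ |x|^k / C`, so for `C = 1 + 4k/c` the at most `k`
lower terms contribute at most `(c/4)|x|^k`; for `|x| ≤ c/(4A)` the remainder contributes at most
`A|x| · |x|^k ≤ (c/4)|x|^k`. The leading term has size at least `c|x|^k`, which leaves `(c/2)|x|^k`.
-/

open Finset

lemma abs_mul_pow_le_div_of_mul_le {a s x C : ℝ} {j k : ℕ} (hjk : j < k) (hs : 0 ≤ s)
    (hC : 1 ≤ C) (ha : |a| ≤ s ^ (k - j)) (hx : C * s ≤ |x|) :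
    |a * x ^ j| ≤ |x| ^ k / C := by
  have hsx : s ≤ |x| / C := (le_div_iff₀' (by linarith)).mpr hx
  calc |a * x ^ j| ≤ s ^ (k - j) * |x| ^ j := by
        rw [abs_mul, abs_pow]
        exact mul_le_mul_of_nonneg_right ha (by positivity)
    _ ≤ (|x| / C) ^ (k - j) * |x| ^ j := by gcongr
    _ = |x| ^ k / C ^ (k - j) := by
        rw [div_pow, div_mul_eq_mul_div, ← pow_add, Nat.sub_add_cancel hjk.le]
    _ ≤ |x| ^ k / C := by
        gcongr
        exact le_self_pow₀ hC (by omega)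

lemma abs_sum_range_mul_pow_le {w : ℕ → ℝ} {s x C : ℝ} {n k : ℕ} (hnk : n ≤ k) (hs : 0 ≤ s)
    (hC : 1 ≤ C) (hw : ∀ j < n, |w j| ≤ s ^ (k - j)) (hx : C * s ≤ |x|) :
    |∑ j ∈ range n, w j * x ^ j| ≤ n * (|x| ^ k / C) :=
  calc |∑ j ∈ range n, w j * x ^ j| ≤ ∑ j ∈ range n, |w j * x ^ j| := abs_sum_le_sum_abs _ _
    _ ≤ ∑ _j ∈ range n, |x| ^ k / C := sum_le_sum fun j hj =>
        have hjn : j < n := mem_range.mp hj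
        abs_mul_pow_le_div_of_mul_le (by omega) hs hC (hw j hjn) hx
    _ = n * (|x| ^ k / C) := by simp

lemma sum_range_succ_eq_of_coeff_pred_eq_zero {R : Type*} [CommSemiring R] {w : ℕ → R} {k : ℕ}
    (hk : 1 ≤ k) (hw : w (k - 1) = 0) (x : R) :
    ∑ j ∈ range (k + 1), w j * x ^ j = ∑ j ∈ range (k - 1), w j * x ^ j + w k * x ^ k := by
  obtain ⟨m, rfl⟩ : ∃ m, k = m + 1 := ⟨k - 1, by omega⟩
  simp only [Nat.add_sub_cancel] at hw ⊢
  simp [sum_range_succ, hw]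

lemma abs_le_mul_pow_of_abs_le_mul_pow_succ {r x A ε : ℝ} {k : ℕ} (hA : 0 < A)
    (hr : |r| ≤ A * |x| ^ (k + 1)) (hx : |x| ≤ ε / A) : |r| ≤ ε * |x| ^ k :=
  calc |r| ≤ A * |x| ^ (k + 1) := hr
    _ = (A * |x|) * |x| ^ k := by ring
    _ ≤ ε * |x| ^ k := by
        gcongr
        rwa [le_div_iff₀' hA] at hx

lemma mul_div_one_add_div_le {n c t : ℝ} (hn : 0 ≤ n) (hc : 0 < c) (ht : 0 ≤ t) :
    n * (t / (1 + 4 * n / c)) ≤ c / 4 * t := by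
  have hCn : c / 4 * (1 + 4 * n / c) = c / 4 + n := by field_simp
  rw [mul_div_assoc', div_le_iff₀ (by positivity), mul_right_comm, hCn]
  nlinarith

/-- if `Φ(θ) = ∑_{j≤k} w_j (θ−θ₀)^j + R(θ−θ₀)` with `|w_k| ≥ c`,
vanishing coefficient of degree `k−1`, `|w_j| ≤ s^{k−j}` for `j ≤ k−2`, and
`|R(x)| ≤ A|x|^{k+1}`, then there are `C, δ > 0` depending only on `k, c, A` such
that `|Φ(θ)| ≥ (c/2)|θ−θ₀|^k` whenever `Cs ≤ |θ−θ₀| ≤ δ`. -/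
theorem stmt_13 (k : ℕ) (hk : 2 ≤ k) (c A : ℝ) (hc : 0 < c) (hA : 0 < A) :
    ∃ C δ : ℝ, 0 < C ∧ 0 < δ ∧
      ∀ (Φ R : ℝ → ℝ) (θ₀ : ℝ) (w : ℕ → ℝ) (s : ℝ), 0 < s → s ≤ 1 →
        (∀ θ : ℝ, Φ θ = (∑ j ∈ Finset.range (k + 1), w j * (θ - θ₀) ^ j) + R (θ - θ₀)) →
        w (k - 1) = 0 → c ≤ |w k| →
        (∀ j : ℕ, j ≤ k - 2 → |w j| ≤ s ^ (k - j)) →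
        (∀ x : ℝ, |R x| ≤ A * |x| ^ (k + 1)) →
        ∀ θ : ℝ, C * s ≤ |θ - θ₀| → |θ - θ₀| ≤ δ →
          c / 2 * |θ - θ₀| ^ k ≤ |Φ θ| := by
  refine ⟨1 + 4 * k / c, c / 4 / A, by positivity, by positivity, ?_⟩
  intro Φ R θ₀ w s hs _ hΦ hw hwk hlow hR θ hxC hxδ
  set x := θ - θ₀
  set S := ∑ j ∈ range (k - 1), w j * x ^ j
  have hC : (1 : ℝ) ≤ 1 + 4 * k / c := le_add_of_nonneg_right (by positivity)
  have hS : |S| ≤ c / 4 * |x| ^ k := by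
    have hk' : ((k - 1 : ℕ) : ℝ) ≤ k := by exact_mod_cast Nat.sub_le k 1
    calc |S| ≤ (k - 1 : ℕ) * (|x| ^ k / (1 + 4 * k / c)) :=
          abs_sum_range_mul_pow_le (by omega) hs.le hC (fun j hj => hlow j (by omega)) hxC
      _ ≤ k * (|x| ^ k / (1 + 4 * k / c)) := by gcongr
      _ ≤ c / 4 * |x| ^ k := mul_div_one_add_div_le k.cast_nonneg hc (by positivity)
  have hRx : |R x| ≤ c / 4 * |x| ^ k := abs_le_mul_pow_of_abs_le_mul_pow_succ hA (hR x) hxδ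
  have hlead : c * |x| ^ k ≤ |w k * x ^ k| := by
    rw [abs_mul, abs_pow]
    exact mul_le_mul_of_nonneg_right hwk (by positivity)
  have hΦx : Φ θ = S + w k * x ^ k + R x := by
    rw [hΦ θ, sum_range_succ_eq_of_coeff_pred_eq_zero (by omega) hw]
  calc c / 2 * |x| ^ k ≤ |w k * x ^ k| - |S + R x| := by linarith [abs_add_le S (R x)]
    _ ≤ |w k * x ^ k + (S + R x)| := abs_sub_abs_le_abs_add _ _
    _ = |Φ θ| := by rw [hΦx]; congr 1; ring
end

section
/- Let γ(θ; v): ℝ × ℝ^{d-1} → ℝ be smooth satisfying the (d−1)-parameter cinematic curvature condition det[∂T/∂θ, ∂T/∂v₁, …, ∂T/∂v_{d-1}] ≠ 0 at a point (θ*, v*), with T = (∂_θγ, …, ∂_θ^d γ)ᵀ, and suppose |∂_θ² γ(θ*, v*)| ≥ c > 0. Let θ₁(v; ξ) be the stationary point solving ξ + ∂_θ γ(θ₁; v) = 0 near this point and Ψ(v; ξ) = ξθ₁ + γ(θ₁; v). Then the (d−1) × (d−1) matrix with entries ∂_{v_i}∂_ξ^{j+1} Ψ(v; ξ), for 2 ≤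 i ≤ d and 1 ≤ j ≤ d−1 (i.e., rows indexed by v₂,…,v_d and columns by ∂_ξ²,…,∂_ξ^d), has nonzero determinant at the corresponding point. -/
open Filter Topology ContDiff
set_option maxHeartbeats 1600000




noncomputable section Claim62Aux

/-- Iterated partial derivative in the first variable, as a function of both variables. -/
noncomputable def Dg {m : ℕ} (γ : ℝ → (Fin m → ℝ) → ℝ) (k : ℕ) (p : ℝ × (Fin m → ℝ)) : ℝ :=
  iteratedDeriv k (fun t => γ t p.2) p.1

theorem hasDerivAt_slice1 {m : ℕ} {f : ℝ × (Fin m → ℝ) → ℝ} {p : ℝ × (Fin m → ℝ)}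
    (hf : DifferentiableAt ℝ f p) :
    HasDerivAt (fun t => f (t, p.2)) (fderiv ℝ f p (1, 0)) p.1 := by
  have h1 : HasDerivAt (fun t : ℝ => (t, p.2)) ((1 : ℝ), (0 : Fin m → ℝ)) p.1 :=
    (hasDerivAt_id p.1).prodMk (hasDerivAt_const _ _)
  have := hf.hasFDerivAt.comp_hasDerivAt p.1 h1
  simpa [Function.comp_def] using this

theorem contDiff_Dg {m : ℕ} {γ : ℝ → (Fin m → ℝ) → ℝ}
    (hγ : ContDiff ℝ ∞ (fun q : ℝ × (Fin m → ℝ) => γ q.1 q.2)) (k : ℕ) :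
    ContDiff ℝ ∞ (Dg γ k) := by
  induction k with
  | zero =>
    rw [show Dg γ 0 = fun q => γ q.1 q.2 from funext fun p => by simp [Dg]]
    exact hγ
  | succ k ih =>
    have hder : Dg γ (k + 1) = fun p => fderiv ℝ (Dg γ k) p (1, 0) := by
      funext p
      have h1 : Dg γ (k+1) p = deriv (fun t => Dg γ k (t, p.2)) p.1 := by
        simp only [Dg, iteratedDeriv_succ]
      rw [h1, (hasDerivAt_slice1 (ih.differentiable (by simp) _)).deriv]
    rw [hder]
    exact (ih.fderiv_right (le_refl _)).clm_apply contDiff_const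

theorem Dg_succ_eq {m : ℕ} {γ : ℝ → (Fin m → ℝ) → ℝ}
    (hγ : ContDiff ℝ ∞ (fun q : ℝ × (Fin m → ℝ) => γ q.1 q.2)) (k : ℕ) (p : ℝ × (Fin m → ℝ)) :
    Dg γ (k + 1) p = fderiv ℝ (Dg γ k) p (1, 0) := by
  have h1 : Dg γ (k+1) p = deriv (fun t => Dg γ k (t, p.2)) p.1 := by
    simp only [Dg, iteratedDeriv_succ]
  rw [h1, (hasDerivAt_slice1 ((contDiff_Dg hγ k).differentiable (by simp) _)).deriv]

end Claim62Aux

noncomputable section Claim62G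
-- (defs from b.lean repeated via include; for testing, inline)
noncomputable def shiftv (n : ℕ) (x : Fin (n+2) → ℝ) : Fin (n+2) → ℝ :=
  fun k => (if h : (k:ℕ)+1 < n+2 then x ⟨(k:ℕ)+1, h⟩ else 0) * (-(x 0)⁻¹)
noncomputable def gfun (n : ℕ) : ℕ → (Fin (n+2) → ℝ) → ℝ
  | 0 => fun x => -(x 0)⁻¹
  | (j+1) => fun x => fderiv ℝ (gfun n j) x (shiftv n x)
lemma gfun_zero (n : ℕ) (x : Fin (n+2) → ℝ) : gfun n 0 x = -(x 0)⁻¹ := rfl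

lemma gfun_succ (n j : ℕ) (x : Fin (n+2) → ℝ) :
    gfun n (j+1) x = fderiv ℝ (gfun n j) x (shiftv n x) := rfl

def Uset (n : ℕ) : Set (Fin (n+2) → ℝ) := {x | x 0 ≠ 0}
lemma isOpen_Uset (n : ℕ) : IsOpen (Uset n) :=
  isOpen_compl_singleton.preimage (continuous_apply 0)
noncomputable def projL (n m : ℕ) : (Fin (n+2) → ℝ) →L[ℝ] (Fin (n+2) → ℝ) :=
  ContinuousLinearMap.pi fun k => if (k:ℕ) < m then ContinuousLinearMap.proj k else 0
lemma projL_apply (n m : ℕ) (x : Fin (n+2) → ℝ) (k : Fin (n+2)) :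
    projL n m x k = if (k:ℕ) < m then x k else 0 := by
  simp only [projL, ContinuousLinearMap.pi_apply]
  split <;> simp
lemma projL_projL (n : ℕ) {m m' : ℕ} (h : m ≤ m') (x : Fin (n+2) → ℝ) :
    projL n m (projL n m' x) = projL n m x := by
  funext k
  simp only [projL_apply]
  by_cases hk : (k:ℕ) < m
  · simp [hk, lt_of_lt_of_le hk h]
  · simp [hk]
lemma contDiffOn_gfun (n j : ℕ) : ContDiffOn ℝ ∞ (gfun n j) (Uset n) := by
  induction j with
  | zero =>
    exact (((ContinuousLinearMap.proj 0 :
      (Fin (n+2) → ℝ) →L[ℝ] ℝ).contDiff.contDiffOn).inv (fun x hx => hx)).neg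
  | succ j ih =>
    have hshift : ContDiffOn ℝ ∞ (shiftv n) (Uset n) := by
      apply contDiffOn_pi.mpr
      intro k
      by_cases h : (k:ℕ)+1 < n+2
      · simp only [shiftv, dif_pos h]
        exact ((ContinuousLinearMap.proj (⟨(k:ℕ)+1, h⟩ : Fin (n+2)) :
          (Fin (n+2) → ℝ) →L[ℝ] ℝ).contDiff.contDiffOn).mul
          ((((ContinuousLinearMap.proj 0 :
            (Fin (n+2) → ℝ) →L[ℝ] ℝ).contDiff.contDiffOn).inv (fun x hx => hx)).neg)
      · simp only [shiftv, dif_neg h, zero_mul]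
        exact contDiffOn_const
    exact (ih.fderiv_of_isOpen (isOpen_Uset n) (by simp)).clm_apply hshift
lemma differentiableAt_gfun (n j : ℕ) {x : Fin (n+2) → ℝ} (hx : x ∈ Uset n) :
    DifferentiableAt ℝ (gfun n j) x :=
  ((contDiffOn_gfun n j).differentiableOn (by simp)).differentiableAt
    ((isOpen_Uset n).mem_nhds hx)

-- NEW PART
lemma projL_mem_Uset (n : ℕ) {m : ℕ} (hm : 0 < m) {x : Fin (n+2) → ℝ} (hx : x ∈ Uset n) :
    projL n m x ∈ Uset n := by
  simpa [Uset, projL_apply, hm] using hx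

lemma gfun_projL (n j : ℕ) : ∀ x ∈ Uset n, gfun n j (projL n (j+1) x) = gfun n j x := by
  induction j with
  | zero =>
    intro x hx
    simp [gfun, projL_apply]
  | succ j ih =>
    -- key fderiv identity
    have key : ∀ x ∈ Uset n, fderiv ℝ (gfun n j) x
        = (fderiv ℝ (gfun n j) (projL n (j+1) x)).comp (projL n (j+1)) := by
      intro x hx
      have heq : (fun y => gfun n j (projL n (j+1) y)) =ᶠ[nhds x] gfun n j := by
        filter_upwards [(isOpen_Uset n).mem_nhds hx] with y hy using ih y hy
      rw [← heq.fderiv_eq]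
      have hdg : DifferentiableAt ℝ (gfun n j) (projL n (j+1) x) :=
        differentiableAt_gfun n j (projL_mem_Uset n (Nat.succ_pos j) hx)
      exact fderiv_comp x hdg (projL n (j+1)).differentiableAt
        |>.trans (by rw [(projL n (j+1)).fderiv])
    intro x hx
    have hPx : projL n (j+2) x ∈ Uset n := projL_mem_Uset n (by omega) hx
    show fderiv ℝ (gfun n j) (projL n (j+2) x) (shiftv n (projL n (j+2) x))
      = fderiv ℝ (gfun n j) x (shiftv n x)
    rw [key _ hPx, key _ hx]
    simp only [ContinuousLinearMap.comp_apply]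
    rw [projL_projL n (by omega) x]
    congr 1
    -- projL (j+1) (shiftv (projL (j+2) x)) = projL (j+1) (shiftv x)
    funext k
    simp only [projL_apply]
    by_cases hk : (k:ℕ) < j+1
    · simp only [hk, if_pos]
      by_cases h : (k:ℕ)+1 < n+2
      · simp [shiftv, dif_pos h, projL_apply, hk, Nat.lt_of_lt_of_le (by omega : (k:ℕ)+1 < j+2) (le_refl _), show (k:ℕ)+1 < j+2 by omega, show (0:ℕ) < j+2 by omega]
      · have h' : ¬((k:ℕ) < n+1) := by omega
        simp [shiftv, h']
    · simp [hk]

lemma gfun_fderiv_comp (n j : ℕ) {x : Fin (n+2) → ℝ} (hx : x ∈ Uset n) :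
    fderiv ℝ (gfun n j) x
      = (fderiv ℝ (gfun n j) (projL n (j+1) x)).comp (projL n (j+1)) := by
  have heq : (fun y => gfun n j (projL n (j+1) y)) =ᶠ[nhds x] gfun n j := by
    filter_upwards [(isOpen_Uset n).mem_nhds hx] with y hy using gfun_projL n j y hy
  rw [← heq.fderiv_eq]
  have hdg : DifferentiableAt ℝ (gfun n j) (projL n (j+1) x) :=
    differentiableAt_gfun n j (projL_mem_Uset n (Nat.succ_pos j) hx)
  exact fderiv_comp x hdg (projL n (j+1)).differentiableAt
    |>.trans (by rw [(projL n (j+1)).fderiv])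

lemma gfun_fderiv_single_eq_zero (n j : ℕ) {x : Fin (n+2) → ℝ} (hx : x ∈ Uset n)
    (k : Fin (n+2)) (hk : j + 1 ≤ (k:ℕ)) :
    fderiv ℝ (gfun n j) x (Pi.single k 1) = 0 := by
  rw [gfun_fderiv_comp n j hx]
  have : projL n (j+1) (Pi.single k 1) = 0 := by
    funext l
    simp only [projL_apply]
    by_cases hl : (l:ℕ) < j+1
    · have : l ≠ k := by
        intro h; subst h; omega
      simp [hl, Pi.single_apply, this]
    · simp [hl]
  simp [ContinuousLinearMap.comp_apply, this]

end Claim62G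

section P3
set_option maxHeartbeats 1600000

lemma fderiv_line {E : Type*} [NormedAddCommGroup E] [NormedSpace ℝ E]
    {g : E → ℝ} {x v : E} {c : ℝ}
    (hg : DifferentiableAt ℝ g x) (h : HasDerivAt (fun t : ℝ => g (x + t • v)) c 0) :
    fderiv ℝ g x v = c := by
  have hline : HasDerivAt (fun t : ℝ => x + t • v) v 0 := by
    simpa using ((hasDerivAt_id (0:ℝ)).smul_const v).const_add x
  have hg' : HasFDerivAt g (fderiv ℝ g x) (x + (0:ℝ) • v) := by
    simpa using hg.hasFDerivAt
  have h2 : HasDerivAt (fun t : ℝ => g (x + t • v)) (fderiv ℝ g x v) 0 :=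
    hg'.comp_hasDerivAt 0 hline
  exact h2.unique h

lemma gfun_fderiv_diag (n : ℕ) : ∀ j, ∀ (hj : j < n+2), ∀ x ∈ Uset n,
    fderiv ℝ (gfun n j) x (Pi.single (⟨j, hj⟩ : Fin (n+2)) (1:ℝ))
      = (-(x 0)⁻¹)^j * ((x 0)⁻¹ * (x 0)⁻¹) := by
  intro j
  induction j with
  | zero =>
    intro hj x hx
    have hx0 : x 0 ≠ 0 := hx
    apply fderiv_line (differentiableAt_gfun n 0 hx)
    have hfn : (fun t : ℝ => gfun n 0 (x + t • (Pi.single (⟨0, hj⟩ : Fin (n+2)) (1:ℝ) : Fin (n+2) → ℝ)))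
        = fun t : ℝ => -(x 0 + t)⁻¹ := by
      funext t
      have h0 : (0 : Fin (n+2)) = ⟨0, hj⟩ := rfl
      have : (x + t • (Pi.single (⟨0, hj⟩ : Fin (n+2)) (1:ℝ) : Fin (n+2) → ℝ)) 0 = x 0 + t := by
        simp [Pi.single_apply, ← h0]
      simp [gfun, this]
    rw [hfn]
    have h1 : HasDerivAt (fun t : ℝ => x 0 + t) 1 0 := by
      simpa using (hasDerivAt_id (0:ℝ)).const_add (x 0)
    have h2 := (h1.inv (by simpa using hx0)).neg
    refine h2.congr_deriv ?_
    field_simp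
    ring_nf
    rw [← mul_pow, mul_inv_cancel₀ hx0, one_pow]
  | succ j ih =>
    intro hj x hx
    have hx0 : x 0 ≠ 0 := hx
    have hjn : j < n+2 := by omega
    set e : Fin (n+2) → ℝ := Pi.single (⟨j+1, hj⟩ : Fin (n+2)) (1:ℝ) with he
    set C : ℝ := fderiv ℝ (gfun n j) x
      (Pi.single (⟨j, hjn⟩ : Fin (n+2)) (-(x 0)⁻¹) : Fin (n+2) → ℝ) with hC
    have key : ∀ t : ℝ, gfun n (j+1) (x + t • e) = gfun n (j+1) x + t * C := by
      intro t
      have hne0 : (⟨j+1, hj⟩ : Fin (n+2)) ≠ 0 := by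
        intro h
        have := congrArg Fin.val h
        simpa using this
      have hy0 : (x + t • e) 0 = x 0 := by
        simp [he, Pi.single_apply, Ne.symm hne0]
      have hy : (x + t • e) ∈ Uset n := by simpa [Uset, hy0] using hx0
      have hproj : projL n (j+1) (x + t • e) = projL n (j+1) x := by
        funext k
        simp only [projL_apply]
        by_cases hk : (k:ℕ) < j+1
        · have hne : k ≠ (⟨j+1, hj⟩ : Fin (n+2)) := by
            intro h
            rw [h] at hk
            exact absurd hk (by simp)
          simp [hk, he, Pi.single_apply, hne]
        · simp [hk]
      have hshift : shiftv n (x + t • e)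
          = shiftv n x + t • (Pi.single (⟨j, hjn⟩ : Fin (n+2)) (-(x 0)⁻¹) : Fin (n+2) → ℝ) := by
        funext k
        have hsing : (Pi.single (⟨j, hjn⟩ : Fin (n+2)) (-(x 0)⁻¹) : Fin (n+2) → ℝ) k
            = if (k:ℕ) = j then -(x 0)⁻¹ else 0 := by
          rw [Pi.single_apply]
          congr 1
          simp only [eq_iff_iff, Fin.ext_iff, Fin.val_mk]
        by_cases h : (k:ℕ)+1 < n+2
        · have he'' : e ⟨(k:ℕ)+1, h⟩ = if (k:ℕ) = j then 1 else 0 := by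
            rw [he, Pi.single_apply]
            congr 1
            simp only [eq_iff_iff, Fin.ext_iff, Fin.val_mk]
            omega
          simp only [shiftv, dif_pos h, Pi.add_apply, Pi.smul_apply, smul_eq_mul, hy0,
            he'', hsing]
          by_cases hkj : (k:ℕ) = j
          · simp only [if_pos hkj]
            ring
          · simp only [if_neg hkj]
            ring
        · have hkj : ¬ ((k:ℕ) = j) := by omega
          simp only [shiftv, dif_neg h, Pi.add_apply, Pi.smul_apply, smul_eq_mul, hy0,
            hsing, hkj, if_false, zero_mul, mul_zero, add_zero]
      show fderiv ℝ (gfun n j) (x + t • e) (shiftv n (x + t • e))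
        = fderiv ℝ (gfun n j) x (shiftv n x) + t * C
      rw [gfun_fderiv_comp n j hy, gfun_fderiv_comp n j hx]
      simp only [ContinuousLinearMap.comp_apply, hproj, hshift, map_add, map_smul,
        smul_eq_mul]
      rw [hC, gfun_fderiv_comp n j hx]
      simp only [ContinuousLinearMap.comp_apply]
    have hC' : HasDerivAt (fun t : ℝ => gfun n (j+1) (x + t • e)) C 0 := by
      have heq : (fun t : ℝ => gfun n (j+1) (x + t • e))
          = fun t => gfun n (j+1) x + t * C := funext key
      rw [heq]
      simpa using ((hasDerivAt_id (0:ℝ)).mul_const C).const_add (gfun n (j+1) x)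
    have hres := fderiv_line (differentiableAt_gfun n (j+1) hx) hC'
    rw [hres, hC]
    have hsingle_smul : (Pi.single (⟨j, hjn⟩ : Fin (n+2)) (-(x 0)⁻¹) : Fin (n+2) → ℝ)
        = (-(x 0)⁻¹) • (Pi.single (⟨j, hjn⟩ : Fin (n+2)) (1:ℝ) : Fin (n+2) → ℝ) := by
      funext k
      simp only [Pi.smul_apply, Pi.single_apply, smul_eq_mul]
      split <;> simp
    rw [hsingle_smul, map_smul, smul_eq_mul, ih hjn x hx]
    ring
end P3


lemma eventuallyEq_iteratedDeriv {f g : ℝ → ℝ} {x : ℝ} (h : f =ᶠ[nhds x] g) (m : ℕ) :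
    iteratedDeriv m f =ᶠ[nhds x] iteratedDeriv m g := by
  induction m with
  | zero => simpa [iteratedDeriv_zero] using h
  | succ m ih => simpa only [iteratedDeriv_succ] using ih.deriv

lemma clm_apply_pi {m : ℕ} (L : (Fin m → ℝ) →L[ℝ] ℝ) (u : Fin m → ℝ) :
    L u = ∑ k, u k * L (Pi.single k 1) := by
  have hu : u = ∑ k : Fin m, u k • (Pi.single k (1:ℝ) : Fin m → ℝ) := by
    funext l
    rw [Finset.sum_apply]
    simp only [Pi.smul_apply, Pi.single_apply, smul_eq_mul, mul_ite, mul_one, mul_zero]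
    rw [Finset.sum_ite_eq Finset.univ l (fun k => u k)]
    simp
  calc L u = L (∑ k : Fin m, u k • (Pi.single k (1:ℝ) : Fin m → ℝ)) := by rw [← hu]
    _ = ∑ k, u k * L (Pi.single k 1) := by
        rw [map_sum]
        exact Finset.sum_congr rfl fun k _ => by rw [map_smul, smul_eq_mul]

theorem stmt16_aux (n : ℕ) (γ : ℝ → (Fin (n + 1) → ℝ) → ℝ)
    (hγ' : ContDiff ℝ ∞ (fun q : ℝ × (Fin (n + 1) → ℝ) => γ q.1 q.2))
    (θs : ℝ) (vs : Fin (n + 1) → ℝ) (ξs : ℝ)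
    (hD2 : Dg γ 2 (θs, vs) ≠ 0)
    (hcin : (Matrix.of fun i j : Fin (n + 2) =>
      if h : j.1 = 0 then
        deriv (fun t : ℝ => iteratedDeriv (i.1 + 1) (fun θ => γ θ vs) t) θs
      else
        deriv (fun a : ℝ => iteratedDeriv (i.1 + 1)
            (fun θ => γ θ (Function.update vs ⟨j.1 - 1, by have := j.2; omega⟩ a)) θs)
          (vs ⟨j.1 - 1, by have := j.2; omega⟩)).det ≠ 0)
    (θ₁ : (Fin (n + 1) → ℝ) → ℝ → ℝ)
    (W : Set ((Fin (n + 1) → ℝ) × ℝ)) (hW : IsOpen W) (hWmem : (vs, ξs) ∈ W)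
    (hθ₁s : ContDiffOn ℝ ∞ (fun q : (Fin (n + 1) → ℝ) × ℝ => θ₁ q.1 q.2) W)
    (hsol : ∀ q ∈ W, q.2 + deriv (fun t => γ t q.1) (θ₁ q.1 q.2) = 0)
    (hθ₁pt : θ₁ vs ξs = θs) :
    (Matrix.of fun i j : Fin (n + 1) =>
      deriv (fun a : ℝ =>
          iteratedDeriv (j.1 + 2)
            (fun ξ : ℝ => ξ * θ₁ (Function.update vs i a) ξ
              + γ (θ₁ (Function.update vs i a) ξ) (Function.update vs i a)) ξs)
        (vs i)).det ≠ 0 := by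
  -- the scalar second-derivative function along the stationary point
  set Z : (Fin (n+1) → ℝ) × ℝ → ℝ := fun q => Dg γ 2 (θ₁ q.1 q.2, q.1) with hZdef
  have hZcont : ContinuousOn Z W := by
    apply (contDiff_Dg hγ' 2).continuous.comp_continuousOn
    exact (hθ₁s.continuousOn).prodMk continuous_fst.continuousOn
  set W₀ : Set ((Fin (n+1) → ℝ) × ℝ) := W ∩ Z ⁻¹' ({0}ᶜ) with hW₀def
  have hW₀open : IsOpen W₀ := hZcont.isOpen_inter_preimage hW isOpen_compl_singleton
  have hW₀sub : W₀ ⊆ W := Set.inter_subset_left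
  have hmem₀ : (vs, ξs) ∈ W₀ := by
    refine ⟨hWmem, ?_⟩
    simp only [hZdef, Set.mem_preimage, Set.mem_compl_iff, Set.mem_singleton_iff]
    simpa [hθ₁pt] using hD2
  -- the vector of higher derivatives along the stationary point
  set Φ : (Fin (n+1) → ℝ) × ℝ → (Fin (n+2) → ℝ) :=
    fun q => fun k => Dg γ ((k:ℕ)+2) (θ₁ q.1 q.2, q.1) with hΦdef
  have hΦ0 : ∀ q, Φ q 0 = Z q := by
    intro q
    simp only [hΦdef, hZdef, Fin.val_zero]
  have hΦmem : ∀ q ∈ W₀, Φ q ∈ Uset n := by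
    intro q hq
    have := hq.2
    simp only [Set.mem_preimage, Set.mem_compl_iff, Set.mem_singleton_iff] at this
    simpa [Uset, hΦ0] using this
  -- differentiability of θ₁
  have hθdiff : ∀ q ∈ W, DifferentiableAt ℝ (fun q : (Fin (n+1) → ℝ) × ℝ => θ₁ q.1 q.2) q :=
    fun q hq => (hθ₁s.differentiableOn (by simp)).differentiableAt (hW.mem_nhds hq)
  -- auxiliary: Dg 1 is the first partial derivative
  have hDg1 : ∀ (z : ℝ) (v' : Fin (n+1) → ℝ), Dg γ 1 (z, v') = deriv (fun t => γ t v') z := by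
    intro z v'
    simp [Dg, iteratedDeriv_one]
  -- derivative of the ξ-slice of θ₁
  have hθξ : ∀ q ∈ W₀, HasDerivAt (fun ξ' => θ₁ q.1 ξ') (-(Φ q 0)⁻¹) q.2 := by
    rintro ⟨v, ξ⟩ hq
    have hdiff := hθdiff _ (hW₀sub hq)
    have hpath : HasDerivAt (fun ξ' : ℝ => (v, ξ')) ((0 : Fin (n+1) → ℝ), (1:ℝ)) ξ :=
      (hasDerivAt_const _ _).prodMk (hasDerivAt_id _)
    set θ' : ℝ := fderiv ℝ (fun q : (Fin (n+1) → ℝ) × ℝ => θ₁ q.1 q.2) (v, ξ) (0, 1) with hθ'def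
    have h1 : HasDerivAt (fun ξ' => θ₁ v ξ') θ' ξ := by
      have h := hdiff.hasFDerivAt.comp_hasDerivAt ξ hpath
      simpa [Function.comp_def] using h
    have hD2q : Φ (v, ξ) 0 ≠ 0 := hΦmem _ hq
    have hDgslice : HasDerivAt (fun ξ' => Dg γ 1 (θ₁ v ξ', v)) (Φ (v, ξ) 0 * θ') ξ := by
      have hp : HasDerivAt (fun ξ' => ((θ₁ v ξ' : ℝ), v)) ((θ', (0 : Fin (n+1) → ℝ))) ξ :=
        h1.prodMk (hasDerivAt_const _ _)
      have h2 := (((contDiff_Dg hγ' 1).differentiable (by simp))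
        _).hasFDerivAt.comp_hasDerivAt ξ hp
      have h3 : ((θ', (0 : Fin (n+1) → ℝ)) : ℝ × (Fin (n+1) → ℝ))
          = θ' • ((1:ℝ), (0 : Fin (n+1) → ℝ)) := by simp
      rw [h3, map_smul] at h2
      have h4 : fderiv ℝ (Dg γ 1) (θ₁ v ξ, v) (1, 0) = Φ (v, ξ) 0 := by
        rw [← Dg_succ_eq hγ' 1 (θ₁ v ξ, v)]
        simp only [hΦdef, Fin.val_zero]
      simpa [smul_eq_mul, h4, mul_comm, Function.comp_def] using h2
    have hF : HasDerivAt (fun ξ' => ξ' + Dg γ 1 (θ₁ v ξ', v)) (1 + Φ (v, ξ) 0 * θ') ξ :=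
      (hasDerivAt_id ξ).add hDgslice
    have hslice_open : IsOpen {ξ' : ℝ | (v, ξ') ∈ W} :=
      hW.preimage (Continuous.prodMk_right v)
    have hev : (fun ξ' => ξ' + Dg γ 1 (θ₁ v ξ', v)) =ᶠ[nhds ξ] (fun _ => (0:ℝ)) := by
      filter_upwards [hslice_open.mem_nhds (hW₀sub hq)] with ξ' hξ'
      rw [hDg1]
      exact hsol (v, ξ') hξ'
    have hF0 : HasDerivAt (fun _ : ℝ => (0:ℝ)) (1 + Φ (v, ξ) 0 * θ') ξ :=
      hF.congr_of_eventuallyEq hev.symm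
    have hzero : 1 + Φ (v, ξ) 0 * θ' = 0 := hF0.unique (hasDerivAt_const _ _)
    have hval : θ' = -(Φ (v, ξ) 0)⁻¹ := by
      field_simp at hzero ⊢
      linarith
    rw [← hval]
    exact h1
  -- slice derivative of the components of Φ in the ξ direction
  have hΦξ : ∀ q ∈ W₀, ∀ k : ℕ,
      HasDerivAt (fun ξ' => Dg γ (k+2) (θ₁ q.1 ξ', q.1))
        (Dg γ (k+3) (θ₁ q.1 q.2, q.1) * (-(Φ q 0)⁻¹)) q.2 := by
    rintro ⟨v, ξ⟩ hq k
    have h1 := hθξ _ hq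
    have hp : HasDerivAt (fun ξ' => ((θ₁ v ξ' : ℝ), v))
        ((-(Φ (v,ξ) 0)⁻¹, (0 : Fin (n+1) → ℝ))) ξ := h1.prodMk (hasDerivAt_const _ _)
    have h2 := (((contDiff_Dg hγ' (k+2)).differentiable (by simp))
      _).hasFDerivAt.comp_hasDerivAt ξ hp
    have h3 : ((-(Φ (v,ξ) 0)⁻¹, (0 : Fin (n+1) → ℝ)) : ℝ × (Fin (n+1) → ℝ))
        = (-(Φ (v,ξ) 0)⁻¹) • ((1:ℝ), (0:Fin (n+1) → ℝ)) := by simp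
    rw [h3, map_smul] at h2
    have h4 : fderiv ℝ (Dg γ (k+2)) (θ₁ v ξ, v) (1, 0) = Dg γ (k+3) (θ₁ v ξ, v) :=
      (Dg_succ_eq hγ' (k+2) _).symm
    simpa [smul_eq_mul, h4, mul_comm, Function.comp_def] using h2
  -- higher ξ-derivatives of θ₁ as universal functions of Φ
  have hA : ∀ j, j < n + 1 → ∀ q ∈ W₀,
      iteratedDeriv (j+1) (fun ξ' => θ₁ q.1 ξ') q.2 = gfun n j (Φ q) := by
    intro j
    induction j with
    | zero =>
      intro _ q hq
      rw [iteratedDeriv_one, (hθξ q hq).deriv, gfun_zero]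
    | succ j ih =>
      intro hj q hq
      obtain ⟨v, ξ⟩ := q
      rw [iteratedDeriv_succ]
      have hW₀slice : IsOpen {ξ' : ℝ | (v, ξ') ∈ W₀} := hW₀open.preimage (Continuous.prodMk_right v)
      have hev : iteratedDeriv (j+1) (fun ξ' => θ₁ v ξ')
          =ᶠ[nhds ξ] fun ξ' => gfun n j (Φ (v, ξ')) := by
        filter_upwards [hW₀slice.mem_nhds hq] with ξ' hξ'
        exact ih (by omega) (v, ξ') hξ'
      rw [hev.deriv_eq]
      have hΦq : Φ (v, ξ) ∈ Uset n := hΦmem _ hq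
      have hΦslice : HasDerivAt (fun ξ' => Φ (v, ξ'))
          (fun k : Fin (n+2) => Dg γ ((k:ℕ)+3) (θ₁ v ξ, v) * (-(Φ (v,ξ) 0)⁻¹)) ξ := by
        rw [hasDerivAt_pi]
        intro k
        exact hΦξ (v, ξ) hq (k:ℕ)
      have hcomp := (differentiableAt_gfun n j hΦq).hasFDerivAt.comp_hasDerivAt ξ hΦslice
      have hder := hcomp.deriv
      simp only [Function.comp_def] at hder
      rw [hder, gfun_succ]
      have hdecomp : (fun k : Fin (n+2) => Dg γ ((k:ℕ)+3) (θ₁ v ξ, v) * (-(Φ (v,ξ) 0)⁻¹))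
          = shiftv n (Φ (v,ξ)) + Pi.single (Fin.last (n+1))
              (Dg γ ((n+1)+3) (θ₁ v ξ, v) * (-(Φ (v,ξ) 0)⁻¹)) := by
        funext k
        by_cases hk : (k:ℕ)+1 < n+2
        · have hkl : k ≠ Fin.last (n+1) := by
            intro h
            rw [h] at hk
            simp [Fin.last] at hk
          simp only [Pi.add_apply, Pi.single_apply, if_neg hkl, add_zero, shiftv, dif_pos hk]
          rfl
        · have hkl : k = Fin.last (n+1) := by
            apply Fin.ext
            simp only [Fin.val_last]
            omega
          subst hkl
          simp only [Pi.add_apply, Pi.single_eq_same, shiftv, Fin.val_last]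
          rw [dif_neg (by omega)]
          ring
      rw [hdecomp, map_add]
      have hzero : fderiv ℝ (gfun n j) (Φ (v,ξ)) (Pi.single (Fin.last (n+1))
          (Dg γ ((n+1)+3) (θ₁ v ξ, v) * (-(Φ (v,ξ) 0)⁻¹))) = 0 := by
        have hsmul : (Pi.single (Fin.last (n+1))
            (Dg γ ((n+1)+3) (θ₁ v ξ, v) * (-(Φ (v,ξ) 0)⁻¹)) : Fin (n+2) → ℝ)
            = (Dg γ ((n+1)+3) (θ₁ v ξ, v) * (-(Φ (v,ξ) 0)⁻¹))
              • (Pi.single (Fin.last (n+1)) (1:ℝ) : Fin (n+2) → ℝ) := by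
          funext k
          simp only [Pi.smul_apply, Pi.single_apply, smul_eq_mul]
          split <;> simp
        rw [hsmul, map_smul, gfun_fderiv_single_eq_zero n j hΦq (Fin.last (n+1))
          (by simp only [Fin.val_last]; omega), smul_zero]
      rw [hzero, add_zero]
  -- derivative of Ψ in ξ equals θ₁
  have hΨd : ∀ q ∈ W₀, HasDerivAt
      (fun ξ' => ξ' * θ₁ q.1 ξ' + γ (θ₁ q.1 ξ') q.1) (θ₁ q.1 q.2) q.2 := by
    rintro ⟨v, ξ⟩ hq
    have h1 := hθξ (v, ξ) hq
    have hmul : HasDerivAt (fun ξ' => ξ' * θ₁ v ξ')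
        (1 * θ₁ v ξ + ξ * (-(Φ (v,ξ) 0)⁻¹)) ξ := (hasDerivAt_id ξ).mul h1
    have hγz : HasDerivAt (fun z => γ z v) (Dg γ 1 (θ₁ v ξ, v)) (θ₁ v ξ) := by
      rw [hDg1]
      have hd : DifferentiableAt ℝ (fun z => γ z v) (θ₁ v ξ) := by
        have hp : HasDerivAt (fun z : ℝ => (z, v)) ((1:ℝ), (0 : Fin (n+1) → ℝ)) (θ₁ v ξ) :=
          (hasDerivAt_id _).prodMk (hasDerivAt_const _ _)
        exact (((hγ'.differentiable (by simp)) _).hasFDerivAt.comp_hasDerivAt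
          (θ₁ v ξ) hp).differentiableAt
      exact hd.hasDerivAt
    have hγslice : HasDerivAt (fun ξ' => γ (θ₁ v ξ') v)
        (Dg γ 1 (θ₁ v ξ, v) * (-(Φ (v,ξ) 0)⁻¹)) ξ := by
      have := hγz.comp ξ h1
      simpa [Function.comp_def] using this
    have hsum := hmul.add hγslice
    have hs : ξ + Dg γ 1 (θ₁ v ξ, v) = 0 := by
      rw [hDg1]
      exact hsol (v,ξ) (hW₀sub hq)
    refine hsum.congr_deriv ?_
    have hΦne : Φ (v,ξ) 0 ≠ 0 := hΦmem _ hq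
    linear_combination (-(Φ (v,ξ) 0)⁻¹) * hs
  -- reduction of higher ξ-derivatives of Ψ to those of θ₁
  have hΨred : ∀ jj : ℕ, ∀ q ∈ W₀,
      iteratedDeriv (jj+2) (fun ξ' => ξ' * θ₁ q.1 ξ' + γ (θ₁ q.1 ξ') q.1) q.2
        = iteratedDeriv (jj+1) (fun ξ' => θ₁ q.1 ξ') q.2 := by
    rintro jj ⟨v, ξ⟩ hq
    rw [iteratedDeriv_succ' (n := jj+1)]
    have hW₀slice : IsOpen {ξ' : ℝ | (v, ξ') ∈ W₀} := hW₀open.preimage (Continuous.prodMk_right v)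
    have hev : deriv (fun ξ' => ξ' * θ₁ v ξ' + γ (θ₁ v ξ') v) =ᶠ[nhds ξ]
        fun ξ' => θ₁ v ξ' := by
      filter_upwards [hW₀slice.mem_nhds hq] with ξ' hξ'
      exact (hΨd (v, ξ') hξ').deriv
    exact (eventuallyEq_iteratedDeriv hev (jj+1)).eq_of_nhds
  -- the coordinate paths
  have hupd : ∀ i : Fin (n+1), HasDerivAt (fun a => Function.update vs i a)
      (Pi.single i 1 : Fin (n+1) → ℝ) (vs i) := by
    intro i
    rw [hasDerivAt_pi]
    intro k
    have hrw : (fun a => Function.update vs i a k) = fun a => if k = i then a else vs k := by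
      funext a
      rw [Function.update_apply]
    rw [hrw]
    by_cases hk : k = i
    · subst hk
      simp only [if_pos rfl, Pi.single_eq_same]
      exact hasDerivAt_id _
    · simp only [if_neg hk]
      rw [Pi.single_eq_of_ne hk]
      exact hasDerivAt_const _ _
  set tvec : Fin (n+1) → ℝ := fun i =>
    fderiv ℝ (fun q : (Fin (n+1) → ℝ) × ℝ => θ₁ q.1 q.2) (vs, ξs)
      ((Pi.single i 1 : Fin (n+1) → ℝ), (0:ℝ)) with htdef
  have hti : ∀ i, HasDerivAt (fun a => θ₁ (Function.update vs i a) ξs) (tvec i) (vs i) := by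
    intro i
    have hpath : HasDerivAt (fun a => ((Function.update vs i a : Fin (n+1) → ℝ), ξs))
        (((Pi.single i 1 : Fin (n+1) → ℝ), (0:ℝ))) (vs i) :=
      (hupd i).prodMk (hasDerivAt_const _ _)
    have h' : HasFDerivAt (fun q : (Fin (n+1) → ℝ) × ℝ => θ₁ q.1 q.2)
        (fderiv ℝ (fun q : (Fin (n+1) → ℝ) × ℝ => θ₁ q.1 q.2) (vs, ξs))
        (Function.update vs i (vs i), ξs) := by
      rw [Function.update_eq_self]
      exact (hθdiff _ hWmem).hasFDerivAt
    have h2 := h'.comp_hasDerivAt (vs i) hpath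
    simpa [Function.comp_def] using h2
  -- derivatives of Dg in the coordinate directions
  have hDgdir : ∀ (m : ℕ) (i : Fin (n+1)),
      HasDerivAt (fun a => Dg γ m (θ₁ (Function.update vs i a) ξs, Function.update vs i a))
        (tvec i * Dg γ (m+1) (θs, vs)
          + fderiv ℝ (Dg γ m) (θs, vs) ((0:ℝ), (Pi.single i 1 : Fin (n+1) → ℝ))) (vs i) := by
    intro m i
    have hpath : HasDerivAt
        (fun a => ((θ₁ (Function.update vs i a) ξs : ℝ),
          (Function.update vs i a : Fin (n+1) → ℝ)))
        ((tvec i, (Pi.single i 1 : Fin (n+1) → ℝ))) (vs i) := (hti i).prodMk (hupd i)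
    have h' : HasFDerivAt (Dg γ m) (fderiv ℝ (Dg γ m) (θs, vs))
        ((θ₁ (Function.update vs i (vs i)) ξs : ℝ),
          (Function.update vs i (vs i) : Fin (n+1) → ℝ)) := by
      rw [Function.update_eq_self, hθ₁pt]
      exact (((contDiff_Dg hγ' m).differentiable (by simp)) _).hasFDerivAt
    have h2 := h'.comp_hasDerivAt (vs i) hpath
    have hsplit : ((tvec i, (Pi.single i 1 : Fin (n+1) → ℝ)) : ℝ × (Fin (n+1) → ℝ))
        = tvec i • ((1:ℝ), (0 : Fin (n+1) → ℝ))
          + ((0:ℝ), (Pi.single i 1 : Fin (n+1) → ℝ)) := by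
      simp
    rw [hsplit, map_add, map_smul] at h2
    have h4 : fderiv ℝ (Dg γ m) (θs, vs) (1, 0) = Dg γ (m+1) (θs, vs) :=
      (Dg_succ_eq hγ' m _).symm
    simpa [Function.comp_def, smul_eq_mul, h4] using h2
  -- the stationarity relation in coordinate directions
  have hcontupd : ∀ i : Fin (n+1),
      Continuous (fun a : ℝ => ((Function.update vs i a : Fin (n+1) → ℝ), ξs)) := by
    intro i
    apply Continuous.prodMk
    · apply continuous_pi
      intro k
      have hrw : (fun a => Function.update vs i a k) = fun a => if k = i then a else vs k := by
        funext a
        rw [Function.update_apply]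
      rw [hrw]
      by_cases hk : k = i
      · simpa [hk] using continuous_id'
      · simp only [if_neg hk]
        exact continuous_const
    · exact continuous_const
  have htval : ∀ i : Fin (n+1),
      tvec i * Dg γ 2 (θs, vs)
        + fderiv ℝ (Dg γ 1) (θs, vs) ((0:ℝ), (Pi.single i 1 : Fin (n+1) → ℝ)) = 0 := by
    intro i
    have hopen : IsOpen {a : ℝ | ((Function.update vs i a : Fin (n+1) → ℝ), ξs) ∈ W} :=
      hW.preimage (hcontupd i)
    have hmem : vs i ∈ {a : ℝ | ((Function.update vs i a : Fin (n+1) → ℝ), ξs) ∈ W} := by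
      simp only [Set.mem_setOf_eq, Function.update_eq_self]
      exact hWmem
    have hev : (fun a => ξs + Dg γ 1 (θ₁ (Function.update vs i a) ξs, Function.update vs i a))
        =ᶠ[nhds (vs i)] fun _ => (0:ℝ) := by
      filter_upwards [hopen.mem_nhds hmem] with a ha
      rw [hDg1]
      exact hsol _ ha
    have hF := (hasDerivAt_const (vs i) ξs).add (hDgdir 1 i)
    have h0 := (hF.congr_of_eventuallyEq hev.symm).unique (hasDerivAt_const _ _)
    simpa using h0
  -- the special point and matrices
  set xs : Fin (n+2) → ℝ := Φ (vs, ξs) with hxsdef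
  have hxsU : xs ∈ Uset n := hΦmem _ hmem₀
  have hxs0 : xs 0 ≠ 0 := hxsU
  set Pmat : Matrix (Fin (n+1)) (Fin (n+1)) ℝ := Matrix.of (fun i k =>
    tvec i * Dg γ ((k:ℕ)+3) (θs, vs)
      + fderiv ℝ (Dg γ ((k:ℕ)+2)) (θs, vs)
          ((0:ℝ), (Pi.single i 1 : Fin (n+1) → ℝ))) with hPdef
  set Cmat : Matrix (Fin (n+1)) (Fin (n+1)) ℝ := Matrix.of (fun j k =>
    fderiv ℝ (gfun n (j:ℕ)) xs
      (Pi.single (Fin.castSucc k) (1:ℝ) : Fin (n+2) → ℝ)) with hCdef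
  -- identification of the goal matrix as a product
  have hdet : (Matrix.of fun i j : Fin (n + 1) =>
      deriv (fun a : ℝ =>
          iteratedDeriv (j.1 + 2)
            (fun ξ : ℝ => ξ * θ₁ (Function.update vs i a) ξ
              + γ (θ₁ (Function.update vs i a) ξ) (Function.update vs i a)) ξs)
        (vs i)) = Pmat * Cmat.transpose := by
    ext i j
    have hopen₀ : IsOpen {a : ℝ | ((Function.update vs i a : Fin (n+1) → ℝ), ξs) ∈ W₀} :=
      hW₀open.preimage (hcontupd i)
    have hmem' : vs i ∈ {a : ℝ | ((Function.update vs i a : Fin (n+1) → ℝ), ξs) ∈ W₀} := by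
      simp only [Set.mem_setOf_eq, Function.update_eq_self]
      exact hmem₀
    have hev : (fun a : ℝ =>
        iteratedDeriv ((j:ℕ) + 2)
          (fun ξ : ℝ => ξ * θ₁ (Function.update vs i a) ξ
            + γ (θ₁ (Function.update vs i a) ξ) (Function.update vs i a)) ξs)
        =ᶠ[nhds (vs i)]
        fun a => gfun n (j:ℕ) (Φ (Function.update vs i a, ξs)) := by
      filter_upwards [hopen₀.mem_nhds hmem'] with a ha
      have h1 := hΨred (j:ℕ) (Function.update vs i a, ξs) ha
      have h2 := hA (j:ℕ) j.isLt (Function.update vs i a, ξs) ha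
      exact h1.trans h2
    rw [Matrix.of_apply, hev.deriv_eq]
    -- derivative of a ↦ Φ(update vs i a, ξs)
    have hΦa : HasDerivAt (fun a => Φ (Function.update vs i a, ξs))
        (fun k : Fin (n+2) => tvec i * Dg γ ((k:ℕ)+3) (θs, vs)
          + fderiv ℝ (Dg γ ((k:ℕ)+2)) (θs, vs)
              ((0:ℝ), (Pi.single i 1 : Fin (n+1) → ℝ))) (vs i) := by
      rw [hasDerivAt_pi]
      intro k
      exact hDgdir ((k:ℕ)+2) i
    have h' : HasFDerivAt (gfun n (j:ℕ)) (fderiv ℝ (gfun n (j:ℕ)) xs)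
        (Φ (Function.update vs i (vs i), ξs)) := by
      rw [Function.update_eq_self]
      exact (differentiableAt_gfun n (j:ℕ) hxsU).hasFDerivAt
    have hcomp := h'.comp_hasDerivAt (vs i) hΦa
    have hder := hcomp.deriv
    simp only [Function.comp_def] at hder
    rw [hder, clm_apply_pi, Fin.sum_univ_castSucc]
    have hlast : fderiv ℝ (gfun n (j:ℕ)) xs
        (Pi.single (Fin.last (n+1)) (1:ℝ) : Fin (n+2) → ℝ) = 0 :=
      gfun_fderiv_single_eq_zero n _ hxsU _ (by simp only [Fin.val_last]; omega)
    rw [hlast, mul_zero, add_zero, Matrix.mul_apply]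
    apply Finset.sum_congr rfl
    intro k _
    simp only [hPdef, hCdef, Matrix.transpose_apply, Matrix.of_apply, Fin.coe_castSucc]
  rw [hdet, Matrix.det_mul, Matrix.det_transpose]
  -- the C factor is lower triangular with nonzero diagonal
  have hCtri : Cmat.BlockTriangular OrderDual.toDual := by
    intro j k hjk
    have hjk' : (j:ℕ) < (k:ℕ) := hjk
    simp only [hCdef, Matrix.of_apply]
    exact gfun_fderiv_single_eq_zero n _ hxsU _ (by simp only [Fin.coe_castSucc]; omega)
  have hCdet : Cmat.det ≠ 0 := by
    rw [Matrix.det_of_lowerTriangular Cmat hCtri]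
    rw [Finset.prod_ne_zero_iff]
    intro j _
    have hcast : (Fin.castSucc j) = (⟨(j:ℕ), by omega⟩ : Fin (n+2)) := rfl
    simp only [hCdef, Matrix.of_apply, hcast]
    rw [gfun_fderiv_diag n (j:ℕ) (by omega) xs hxsU]
    exact mul_ne_zero (pow_ne_zero _ (neg_ne_zero.2 (inv_ne_zero hxs0)))
      (mul_ne_zero (inv_ne_zero hxs0) (inv_ne_zero hxs0))
  -- the P factor is nonsingular by the cinematic curvature condition
  have hPdet : Pmat.det ≠ 0 := by
    set Mmat : Matrix (Fin (n + 2)) (Fin (n + 2)) ℝ := Matrix.of fun i j : Fin (n + 2) =>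
      if h : j.1 = 0 then
        deriv (fun t : ℝ => iteratedDeriv (i.1 + 1) (fun θ => γ θ vs) t) θs
      else
        deriv (fun a : ℝ => iteratedDeriv (i.1 + 1)
            (fun θ => γ θ (Function.update vs ⟨j.1 - 1, by have := j.2; omega⟩ a)) θs)
          (vs ⟨j.1 - 1, by have := j.2; omega⟩) with hMdef
    have hMcin : Mmat.det ≠ 0 := hcin
    -- identify entries of Mmat
    have hM0 : ∀ i : Fin (n+2), Mmat i 0 = Dg γ ((i:ℕ)+2) (θs, vs) := by
      intro i
      simp only [hMdef, Matrix.of_apply]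
      rw [dif_pos (by simp : ((0 : Fin (n+2)):ℕ) = 0)]
      exact (congrFun (iteratedDeriv_succ (n := (i:ℕ)+1) (f := fun θ => γ θ vs)) θs).symm
    have hMc : ∀ (i : Fin (n+2)) (c : Fin (n+1)), Mmat i (Fin.succ c)
        = fderiv ℝ (Dg γ ((i:ℕ)+1)) (θs, vs)
            ((0:ℝ), (Pi.single c 1 : Fin (n+1) → ℝ)) := by
      intro i c
      simp only [hMdef, Matrix.of_apply]
      rw [dif_neg (by simp : ¬ ((Fin.succ c : Fin (n+2)):ℕ) = 0)]
      have hidx : (⟨((Fin.succ c : Fin (n+2)):ℕ) - 1, by have := (Fin.succ c).2; omega⟩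
          : Fin (n+1)) = c := by
        apply Fin.ext
        simp
      rw [hidx]
      -- compute the derivative
      have hpath : HasDerivAt (fun a => ((θs : ℝ), (Function.update vs c a : Fin (n+1) → ℝ)))
          (((0:ℝ), (Pi.single c 1 : Fin (n+1) → ℝ))) (vs c) :=
        (hasDerivAt_const _ _).prodMk (hupd c)
      have h' : HasFDerivAt (Dg γ ((i:ℕ)+1)) (fderiv ℝ (Dg γ ((i:ℕ)+1)) (θs, vs))
          ((θs : ℝ), (Function.update vs c (vs c) : Fin (n+1) → ℝ)) := by
        rw [Function.update_eq_self]
        exact (((contDiff_Dg hγ' ((i:ℕ)+1)).differentiable (by simp)) _).hasFDerivAt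
      have h2 := h'.comp_hasDerivAt (vs c) hpath
      have h3 := h2.deriv
      simp only [Function.comp_def] at h3
      exact h3
    -- column operations matrix
    set Kmat : Matrix (Fin (n+2)) (Fin (n+2)) ℝ := Matrix.of (fun s c : Fin (n+2) =>
      (if s = c then (1:ℝ) else 0)
        + (if (c:ℕ) ≠ 0 ∧ s = 0 then tvec ⟨(c:ℕ)-1, by have := c.2; omega⟩ else 0))
      with hKdef
    have hKtri : Kmat.BlockTriangular id := by
      intro s c hsc
      have hsc' : (c:ℕ) < (s:ℕ) := hsc
      simp only [hKdef, Matrix.of_apply]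
      rw [if_neg (by intro h; rw [h] at hsc'; omega),
        if_neg (by rintro ⟨-, rfl⟩; simp at hsc')]
      simp
    have hKdet : Kmat.det = 1 := by
      rw [Matrix.det_of_upperTriangular hKtri]
      apply Finset.prod_eq_one
      intro s _
      have h2 : ¬ ((s:ℕ) ≠ 0 ∧ s = 0) := by
        rintro ⟨h1, rfl⟩
        simp at h1
      simp [hKdef, h2]
    -- the product MK
    have hMK : ∀ (r c : Fin (n+2)), (Mmat * Kmat) r c
        = Mmat r c + (if (c:ℕ) ≠ 0 then
            tvec ⟨(c:ℕ)-1, by have := c.2; omega⟩ * Mmat r 0 else 0) := by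
      intro r c
      rw [Matrix.mul_apply]
      have hsplit : ∀ s : Fin (n+2), Mmat r s * Kmat s c
          = (if s = c then Mmat r s else 0)
            + (if (c:ℕ) ≠ 0 then (if s = 0 then tvec ⟨(c:ℕ)-1, by have := c.2; omega⟩
                * Mmat r s else 0) else 0) := by
        intro s
        simp only [hKdef, Matrix.of_apply, mul_add]
        congr 1
        · by_cases h : s = c <;> simp [h]
        · by_cases hc : (c:ℕ) ≠ 0
          · by_cases hs : s = 0 <;> simp [hc, hs, mul_comm]
          · simp [hc]
      rw [Finset.sum_congr rfl (fun s _ => hsplit s), Finset.sum_add_distrib]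
      congr 1
      · rw [Finset.sum_ite_eq' Finset.univ c (fun s => Mmat r s)]
        simp
      · by_cases hc : (c:ℕ) ≠ 0
        · simp only [if_pos hc]
          rw [Finset.sum_ite_eq' Finset.univ (0 : Fin (n+2))
            (fun s => tvec ⟨(c:ℕ)-1, by have := c.2; omega⟩ * Mmat r s)]
          simp
        · simp [hc]
    -- expansion along the first row
    have hfirst : ∀ c : Fin (n+2), (c:ℕ) ≠ 0 → (Mmat * Kmat) 0 c = 0 := by
      intro c hc
      rw [hMK 0 c, if_pos hc]
      obtain ⟨c', rfl⟩ : ∃ c' : Fin (n+1), c = Fin.succ c' := by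
        refine ⟨⟨(c:ℕ)-1, by have := c.2; omega⟩, ?_⟩
        apply Fin.ext
        simp
        omega
      rw [hMc 0 c', hM0 0]
      have hidx : (⟨((Fin.succ c' : Fin (n+2)):ℕ)-1, by have := (Fin.succ c').2; omega⟩
          : Fin (n+1)) = c' := by
        apply Fin.ext
        simp
      rw [hidx]
      have := htval c'
      have h01 : ((0 : Fin (n+2)):ℕ) + 1 = 1 := by simp
      have h02 : ((0 : Fin (n+2)):ℕ) + 2 = 2 := by simp
      rw [h01, h02]
      linarith [htval c']
    have hMKdet : (Mmat * Kmat).det = Mmat.det := by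
      rw [Matrix.det_mul, hKdet, mul_one]
    have hexp := Matrix.det_succ_row_zero (Mmat * Kmat)
    rw [Finset.sum_eq_single (0 : Fin (n+2))] at hexp
    rotate_left
    · intro c _ hc
      rw [hfirst c (fun h => hc (Fin.ext (by simpa using h)))]
      ring
    · intro h
      simp at h
    have hsub : (Mmat * Kmat).submatrix Fin.succ (Fin.succAbove 0) = Pmat.transpose := by
      ext r c
      rw [Matrix.submatrix_apply, Fin.succAbove_zero]
      rw [hMK]
      rw [if_pos (by simp : ((Fin.succ c : Fin (n+2)):ℕ) ≠ 0)]
      have hidx : (⟨((Fin.succ c : Fin (n+2)):ℕ)-1, by have := (Fin.succ c).2; omega⟩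
          : Fin (n+1)) = c := by
        apply Fin.ext
        simp
      rw [hidx, hMc (Fin.succ r) c, hM0 (Fin.succ r)]
      simp only [hPdef, Matrix.transpose_apply, Matrix.of_apply, Fin.val_succ]
      ring_nf
    rw [hsub] at hexp
    rw [hMKdet] at hexp
    have hM00 : (Mmat * Kmat) 0 0 = Dg γ 2 (θs, vs) := by
      rw [hMK, if_neg (by simp), hM0]
      simp
    rw [hM00] at hexp
    simp only [Fin.val_zero, pow_zero, one_mul, Matrix.det_transpose] at hexp
    intro hP
    rw [hP, mul_zero] at hexp
    exact hMcin hexp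
  exact mul_ne_zero hPdet hCdet

/-- Claim 6.2: suppose `γ(θ; v)` is smooth with parameters
`v = (v₂, …, v_d) ∈ ℝ^{d-1}` (encoded by `Fin (d-1)`), satisfies the cinematic
curvature condition `det[∂T/∂θ, ∂T/∂v₂, …, ∂T/∂v_d] ≠ 0` at `(θ*, v*)` where
`T = (∂_θγ, …, ∂_θ^dγ)ᵀ`, and `|∂_θ²γ(θ*, v*)| ≥ c > 0`.  Let `θ₁(v; ξ)` be the
smooth stationary point solving `ξ + ∂_θγ(θ₁; v) = 0` near `(v*, ξ*)` with
`θ₁(v*; ξ*) = θ*`, and let `Ψ(v; ξ) = ξθ₁ + γ(θ₁; v)`.  Then the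
`(d−1) × (d−1)` matrix with entries `∂_{v_i}∂_ξ^{j+1}Ψ` (rows `i = 2,…,d`,
columns `∂_ξ², …, ∂_ξ^d`) has nonzero determinant at `(v*, ξ*)`. -/
theorem stmt_16 (d : ℕ) (hd : 2 ≤ d) (γ : ℝ → (Fin (d - 1) → ℝ) → ℝ)
    (hγ : ContDiff ℝ (⊤ : ℕ∞) (fun q : ℝ × (Fin (d - 1) → ℝ) => γ q.1 q.2))
    (θs : ℝ) (vs : Fin (d - 1) → ℝ) (ξs : ℝ) (c : ℝ) (hc : 0 < c)
    (hc2 : c ≤ |iteratedDeriv 2 (fun t => γ t vs) θs|)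
    (hcin : (Matrix.of fun i j : Fin d =>
      if h : j.1 = 0 then
        deriv (fun t : ℝ => iteratedDeriv (i.1 + 1) (fun θ => γ θ vs) t) θs
      else
        deriv (fun a : ℝ => iteratedDeriv (i.1 + 1)
            (fun θ => γ θ (Function.update vs ⟨j.1 - 1, by have := j.2; omega⟩ a)) θs)
          (vs ⟨j.1 - 1, by have := j.2; omega⟩)).det ≠ 0)
    (θ₁ : (Fin (d - 1) → ℝ) → ℝ → ℝ)
    (W : Set ((Fin (d - 1) → ℝ) × ℝ)) (hW : IsOpen W) (hWmem : (vs, ξs) ∈ W)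
    (hθ₁smooth : ContDiffOn ℝ (⊤ : ℕ∞) (fun q : (Fin (d - 1) → ℝ) × ℝ => θ₁ q.1 q.2) W)
    (hsol : ∀ q ∈ W, q.2 + deriv (fun t => γ t q.1) (θ₁ q.1 q.2) = 0)
    (hθ₁pt : θ₁ vs ξs = θs) :
    (Matrix.of fun i j : Fin (d - 1) =>
      deriv (fun a : ℝ =>
          iteratedDeriv (j.1 + 2)
            (fun ξ : ℝ => ξ * θ₁ (Function.update vs i a) ξ
              + γ (θ₁ (Function.update vs i a) ξ) (Function.update vs i a)) ξs)
        (vs i)).det ≠ 0 := by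
  obtain ⟨n, rfl⟩ : ∃ n, d = n + 2 := ⟨d - 2, by omega⟩
  have hD2 : Dg γ 2 (θs, vs) ≠ 0 := by
    have h0 : (0:ℝ) < |iteratedDeriv 2 (fun t => γ t vs) θs| := lt_of_lt_of_le hc hc2
    intro h
    rw [show iteratedDeriv 2 (fun t => γ t vs) θs = Dg γ 2 (θs, vs) from rfl, h] at h0
    simp at h0
  exact stmt16_aux n γ (hγ.of_le (by simp)) θs vs ξs hD2 hcin θ₁ W hW hWmem
    (hθ₁smooth.of_le (by simp)) hsol hθ₁pt
end
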